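/- Let K be an algebraically closed field, and let V ⊂ ℙ³(K) be a projective surface defined by a homogeneous polynomial P over a subfield 𝔽_q ⊆ K. Suppose H is a plane in ℙ³ such that the plane curve V ∩ H contains a non-repeated absolutely irreducible component defined over 𝔽_q. Then V possesses a non-repeated absolutely irreducible component defined over 𝔽_q. -/
import Mathlib


open MvPolynomial

/-- A polynomial over an algebraically closed field `K` is (up to a nonzero scalar)
defined over a subfield `F`. -/
def DefinedOver {K : Type} [Field K] {σ : Type} (F : Subfield K)
    (g : MvPolynomial σ K) : Prop :=
  ∃ c : K, c ≠ 0 ∧ ∀ mo : σ →₀ ℕ, (c • g).coeff mo ∈ F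

/-- Units of a multivariate polynomial ring over a field are nonzero constants. -/
lemma mv_isUnit_eq_C {K : Type} [Field K] :
    ∀ (n : ℕ) (u : MvPolynomial (Fin n) K), IsUnit u → ∃ c : K, c ≠ 0 ∧ u = C c := by
  intro n
  induction n with
  | zero =>
    intro u hu
    refine ⟨_, ?_, u.eq_C_of_isEmpty⟩
    intro h0
    apply hu.ne_zero
    rw [u.eq_C_of_isEmpty, h0, map_zero]
  | succ n ih =>
    intro u hu
    have hu' : IsUnit (finSuccEquiv K n u) := hu.map _
    obtain ⟨r, hr, hru⟩ := Polynomial.isUnit_iff.mp hu'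
    obtain ⟨c, hc0, rfl⟩ := ih r hr
    refine ⟨c, hc0, ?_⟩
    have h2 : ((C c : MvPolynomial (Fin (n+1)) K)) =
        (finSuccEquiv K n).symm (Polynomial.C (C c)) :=
      (RingHom.congr_fun (finSuccEquiv_comp_C_eq_C n) c).symm
    have h1 : u = (finSuccEquiv K n).symm (Polynomial.C (C c)) := by
      apply (finSuccEquiv K n).injective
      rw [AlgEquiv.apply_symm_apply, hru]
    rw [h1, ← h2]

/-- An element of `K` fixed by `x ↦ x ^ |F|` lies in `F`. -/
lemma mem_subfield_of_pow_card {K : Type} [Field K] (F : Subfield K) [Fintype F]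
    (x : K) (hx : x ^ Fintype.card F = x) : x ∈ F := by
  classical
  set q := Fintype.card F with hq
  have hq1 : 1 < q := Fintype.one_lt_card
  set f : Polynomial K := Polynomial.X ^ q - Polynomial.X with hf
  have hdeg : f.natDegree = q := by
    rw [hf, Polynomial.natDegree_sub_eq_left_of_natDegree_lt] <;>
      simp [Polynomial.natDegree_X_pow, Polynomial.natDegree_X] <;> omega
  have hf0 : f ≠ 0 := by
    intro h
    rw [h, Polynomial.natDegree_zero] at hdeg
    omega
  have hroot : ∀ a : K, a ^ q = a → a ∈ f.roots := by
    intro a ha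
    rw [Polynomial.mem_roots hf0]
    simp [Polynomial.IsRoot, hf, ha]
  let s : Finset K := Finset.univ.image (fun a : F => (a : K))
  have hs_card : s.card = q := by
    rw [Finset.card_image_of_injective _ Subtype.val_injective, Finset.card_univ]
  have hs_sub : s ⊆ f.roots.toFinset := by
    intro y hy
    simp only [s, Finset.mem_image, Finset.mem_univ, true_and] at hy
    obtain ⟨a, rfl⟩ := hy
    refine Multiset.mem_toFinset.2 (hroot _ ?_)
    have := FiniteField.pow_card a
    calc ((a : K)) ^ q = ((a ^ q : F) : K) := by push_cast; ring
    _ = a := by rw [this]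
  by_contra hx'
  have hxs : x ∉ s := by
    intro h
    simp only [s, Finset.mem_image, Finset.mem_univ, true_and] at h
    obtain ⟨a, rfl⟩ := h
    exact hx' a.2
  have hins : insert x s ⊆ f.roots.toFinset := by
    intro y hy
    rcases Finset.mem_insert.mp hy with rfl | hy
    · exact Multiset.mem_toFinset.2 (hroot _ hx)
    · exact hs_sub hy
  have h1 : q + 1 ≤ f.roots.toFinset.card := by
    have := Finset.card_le_card hins
    rwa [Finset.card_insert_of_notMem hxs, hs_card] at this
  have h2 : f.roots.toFinset.card ≤ q :=
    le_trans (Multiset.toFinset_card_le _) (le_trans f.card_roots' (le_of_eq hdeg))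
  omega

/-- If a prime `g` divides the image of `P` under a ring hom, it divides the image of
some prime factor of `P`. -/
lemma exists_prime_factor_dvd_map {A B : Type} [CommRing A] [IsDomain A]
    [UniqueFactorizationMonoid A] [CommRing B] (S : A →+* B) {g : B} (hg : Prime g)
    (P : A) (hP : P ≠ 0) (hdvd : g ∣ S P) :
    ∃ G : A, Prime G ∧ G ∣ P ∧ g ∣ S G := by
  revert hP hdvd
  refine UniqueFactorizationMonoid.induction_on_prime
    (P := fun a => a ≠ 0 → g ∣ S a → ∃ G : A, Prime G ∧ G ∣ a ∧ g ∣ S G) P ?_ ?_ ?_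
  · intro h _; exact absurd rfl h
  · intro x hx _ hdvd
    exact absurd (isUnit_of_dvd_unit hdvd (hx.map S)) hg.not_unit
  · intro a p ha hp IH _ hdvd
    rw [map_mul] at hdvd
    rcases hg.2.2 _ _ hdvd with h | h
    · exact ⟨p, hp, dvd_mul_right _ _, h⟩
    · obtain ⟨G, hG, hGa, hgG⟩ := IH ha h
      exact ⟨G, hG, hGa.mul_left _, hgG⟩
/-- Lemma (Aubry–McGuire–Rodier, specialized to surfaces in `ℙ³`): let `V ⊂ ℙ³(K)` be
the surface defined by a homogeneous polynomial `P` with coefficients in a finite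
subfield `F = 𝔽_q` of the algebraically closed field `K`.  If the plane curve cut out
on an `F`-rational plane `H` (parametrized by an `F`-linear map of rank 3) contains a
non-repeated absolutely irreducible component defined over `F`, then `V` possesses a
non-repeated absolutely irreducible component defined over `F`. -/
theorem surface_component_from_plane_section
    (K : Type) [Field K] [IsAlgClosed K] (F : Subfield K) [Fintype F]
    (d : ℕ) (P : MvPolynomial (Fin 4) K) (hPhom : P.IsHomogeneous d)
    (hPF : ∀ mo : Fin 4 →₀ ℕ, P.coeff mo ∈ F)
    -- the plane `H`, parametrized over `F` by a rank-3 linear substitution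
    (b : Matrix (Fin 4) (Fin 3) F) (hb : b.rank = 3)
    -- the polynomial defining the plane curve `V ∩ H`
    (Q : MvPolynomial (Fin 3) K)
    (hQ : Q = aeval (fun i : Fin 4 => ∑ j : Fin 3, (b i j : K) • (X j : MvPolynomial (Fin 3) K)) P)
    -- `V ∩ H` contains a non-repeated absolutely irreducible component over `F`
    (hcomp : ∃ g : MvPolynomial (Fin 3) K,
      Irreducible g ∧ g ∣ Q ∧ ¬ (g * g ∣ Q) ∧ DefinedOver F g) :
    ∃ G : MvPolynomial (Fin 4) K,
      Irreducible G ∧ G ∣ P ∧ ¬ (G * G ∣ P) ∧ DefinedOver F G := by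
  classical
  obtain ⟨g, hg_irr, hg_dvd, hg_nsq, c₀, hc₀, hc₀F⟩ := hcomp
  set q := Fintype.card F with hq
  have hq1 : 1 < q := Fintype.one_lt_card
  -- characteristic setup
  set p := ringChar F with hp_def
  haveI : CharP F p := ringChar.charP F
  have hp : p.Prime := CharP.char_is_prime F p
  obtain ⟨nn, -, hcard⟩ := FiniteField.card F p
  haveI : CharP K p := charP_of_injective_ringHom (f := F.subtype) Subtype.val_injective p
  haveI : Fact p.Prime := ⟨hp⟩
  -- the Frobenius `x ↦ x ^ q` as a ring automorphism of `K`
  set φ : K ≃+* K := iterateFrobeniusEquiv K p nn with hφ_def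
  have hφ : ∀ x : K, φ x = x ^ q := by
    intro x
    rw [hφ_def, iterateFrobeniusEquiv_def, hq, hcard]
  -- elements of `F` are fixed by the Frobenius
  have hFfix : ∀ x : K, x ∈ F → x ^ q = x := by
    intro x hx
    have h := FiniteField.pow_card (⟨x, hx⟩ : F)
    calc x ^ q = (((⟨x, hx⟩ : F) ^ q : F) : K) := by push_cast; ring
    _ = x := by rw [h]
  -- the substitution ring hom and Frobenius on polynomial rings
  set s : Fin 4 → MvPolynomial (Fin 3) K :=
    fun i => ∑ j : Fin 3, (b i j : K) • (X j : MvPolynomial (Fin 3) K) with hs_def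
  set S : MvPolynomial (Fin 4) K →+* MvPolynomial (Fin 3) K :=
    (aeval s : MvPolynomial (Fin 4) K →ₐ[K] MvPolynomial (Fin 3) K).toRingHom with hS_def
  set Φ : MvPolynomial (Fin 4) K ≃+* MvPolynomial (Fin 4) K :=
    mapEquiv (Fin 4) φ with hΦ_def
  set ψ : MvPolynomial (Fin 3) K ≃+* MvPolynomial (Fin 3) K :=
    mapEquiv (Fin 3) φ with hψ_def
  have hΦ_coeff : ∀ (R : MvPolynomial (Fin 4) K) mo, (Φ R).coeff mo = φ (R.coeff mo) := by
    intro R mo; simp [hΦ_def, coeff_map]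
  have hψ_coeff : ∀ (R : MvPolynomial (Fin 3) K) mo, (ψ R).coeff mo = φ (R.coeff mo) := by
    intro R mo; simp [hψ_def, coeff_map]
  -- the Frobenius fixes `P`
  have hΦP : Φ P = P := by
    apply MvPolynomial.ext
    intro mo
    rw [hΦ_coeff, hφ, hFfix _ (hPF mo)]
  -- the Frobenius commutes with the substitution
  have hcomm : ∀ R : MvPolynomial (Fin 4) K, ψ (S R) = S (Φ R) := by
    have key : (ψ : MvPolynomial (Fin 3) K →+* MvPolynomial (Fin 3) K).comp S
        = S.comp (Φ : MvPolynomial (Fin 4) K →+* MvPolynomial (Fin 4) K) := by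
      apply MvPolynomial.ringHom_ext
      · intro a
        simp only [RingHom.comp_apply, RingEquiv.coe_toRingHom]
        rw [show Φ (C a) = C (φ a) by simp [hΦ_def, map_C]]
        rw [show S (C a) = C a by simp [hS_def, aeval_C, algebraMap_eq]]
        rw [show S (C (φ a)) = C (φ a) by simp [hS_def, aeval_C, algebraMap_eq]]
        simp [hψ_def, map_C]
      · intro i
        simp only [RingHom.comp_apply, RingEquiv.coe_toRingHom]
        rw [show Φ (X i) = X i by simp [hΦ_def, map_X]]
        have hXi : ψ (S (X i)) = S (X i) := by
          have hSX : S (X i) = s i := by simp [hS_def]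
          rw [hSX, hs_def]
          simp only [map_sum]
          refine Finset.sum_congr rfl ?_
          intro j _
          rw [smul_eq_C_mul, map_mul,
            show ψ (C ((b i j : K))) = C (φ (b i j : K)) by simp [hψ_def, map_C],
            show ψ (X j : MvPolynomial (Fin 3) K) = X j by simp [hψ_def, map_X],
            hφ, hFfix _ (SetLike.coe_mem (b i j))]
        exact hXi
    intro R
    exact RingHom.congr_fun key R
  -- `g` is (up to a nonzero constant) fixed by the Frobenius; in particular `g ∣ ψ g`
  have hψc₀g : ψ (c₀ • g) = c₀ • g := by
    apply MvPolynomial.ext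
    intro mo
    rw [hψ_coeff, hφ, hFfix _ (hc₀F mo)]
  have hgψg : g ∣ ψ g := by
    have h1 : ψ (c₀ • g) = C (φ c₀) * ψ g := by
      rw [smul_eq_C_mul, map_mul]
      congr 1
      simp [hψ_def, map_C]
    have h2 : C (φ c₀) * ψ g = C c₀ * g := by rw [← h1, hψc₀g, smul_eq_C_mul]
    have hφc₀ : φ c₀ ≠ 0 := by
      rw [hφ]; exact pow_ne_zero _ hc₀
    have hCne : (C (φ c₀) : MvPolynomial (Fin 3) K) ≠ 0 := by
      simpa using hφc₀
    have key : C (φ c₀) * (C ((φ c₀)⁻¹ * c₀) * g) = C c₀ * g := by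
      rw [← mul_assoc, ← map_mul, ← mul_assoc, mul_inv_cancel₀ hφc₀, one_mul]
    have hψg_eq : ψ g = C ((φ c₀)⁻¹ * c₀) * g :=
      mul_left_cancel₀ hCne (by rw [h2, key])
    exact ⟨C ((φ c₀)⁻¹ * c₀), by rw [hψg_eq, mul_comm]⟩
  -- `P` and `Q` are nonzero
  have hQ0 : Q ≠ 0 := fun h => hg_nsq (h ▸ dvd_zero _)
  have hP0 : P ≠ 0 := by
    intro h
    apply hQ0
    rw [hQ, h, map_zero]
  -- `g` is prime
  have hg_prime : Prime g := (UniqueFactorizationMonoid.irreducible_iff_prime).mp hg_irr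
  -- extract a prime factor `G` of `P` with `g ∣ S G`
  have hgSP : g ∣ S P := by rw [hS_def]; exact hQ ▸ hg_dvd
  obtain ⟨G, hG_prime, hG_dvd, hg_SG⟩ := exists_prime_factor_dvd_map S hg_prime P hP0 hgSP
  -- `G` is not a repeated factor
  have hG_nsq : ¬ (G * G ∣ P) := by
    intro h
    apply hg_nsq
    have : g * g ∣ S (G * G) := by
      rw [map_mul]; exact mul_dvd_mul hg_SG hg_SG
    exact this.trans (hQ ▸ map_dvd S h)
  -- `Φ G` is associated to `G`
  have hg_SΦG : g ∣ S (Φ G) := by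
    rw [← hcomm]
    refine hgψg.trans ?_
    obtain ⟨t, ht⟩ := hg_SG
    exact ⟨ψ t, by rw [ht, map_mul]⟩
  have hΦG_dvd : Φ G ∣ P := by
    obtain ⟨t, ht⟩ := hG_dvd
    refine ⟨Φ t, ?_⟩
    rw [← hΦP, ht, map_mul]
  have hΦG_prime : Prime (Φ G) := by
    refine (UniqueFactorizationMonoid.irreducible_iff_prime).mp ?_
    exact hG_prime.irreducible.map (F := MvPolynomial (Fin 4) K ≃+* MvPolynomial (Fin 4) K) Φ
  have hassoc : Associated G (Φ G) := by
    by_contra hne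
    have hnd : ¬ (Φ G ∣ G) := fun h => hne (hΦG_prime.associated_of_dvd hG_prime h).symm
    obtain ⟨R, hR⟩ := hG_dvd
    have hΦG_R : Φ G ∣ R := by
      rcases hΦG_prime.2.2 G R (hR ▸ hΦG_dvd) with h | h
      · exact absurd h hnd
      · exact h
    have hGG : G * Φ G ∣ P := by
      obtain ⟨T, hT⟩ := hΦG_R
      exact ⟨T, by rw [hR, hT, mul_assoc]⟩
    apply hg_nsq
    have : g * g ∣ S (G * Φ G) := by
      rw [map_mul]; exact mul_dvd_mul hg_SG hg_SΦG
    exact this.trans (hQ ▸ map_dvd S hGG)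
  -- hence `Φ G = C w * G` for some nonzero `w`
  obtain ⟨U, hU⟩ := hassoc
  obtain ⟨w, hw0, hwU⟩ := mv_isUnit_eq_C 4 (U : MvPolynomial (Fin 4) K) U.isUnit
  have hΦG : Φ G = C w * G := by rw [← hU, hwU, mul_comm]
  -- Hilbert 90: find `c` with `c ^ (q-1) = w⁻¹`, then `c • G` has coefficients in `F`
  obtain ⟨cc, hcc⟩ := IsAlgClosed.exists_pow_nat_eq (w⁻¹) (n := q - 1) (by omega)
  have hcc0 : cc ≠ 0 := by
    intro h
    rw [h, zero_pow (by omega)] at hcc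
    exact hw0 (by rw [← inv_inv w, ← hcc, inv_zero])
  have hccq : cc ^ q = w⁻¹ * cc := by
    have : q = (q - 1) + 1 := by omega
    rw [this, pow_succ, hcc]
  refine ⟨G, hG_prime.irreducible, hG_dvd, hG_nsq, cc, hcc0, ?_⟩
  intro mo
  set a := G.coeff mo with ha_def
  have hcoeff : (cc • G).coeff mo = cc * a := by rw [smul_eq_C_mul, coeff_C_mul]
  rw [hcoeff]
  apply mem_subfield_of_pow_card
  have haq : a ^ q = w * a := by
    have h1 := hΦ_coeff G mo
    rw [hΦG, coeff_C_mul, hφ] at h1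
    exact h1.symm
  calc (cc * a) ^ q = cc ^ q * a ^ q := by rw [mul_pow]
  _ = (w⁻¹ * cc) * (w * a) := by rw [hccq, haq]
  _ = cc * a := by field_simp
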